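/- arXiv:math/0304167 — 4 statements merged into one kernel-verified Lean document; each statement's English description precedes it below -/
import Mathlib

section
/- There exists a constant λ > 1 with the following property: for every δ > 0 there exists a₀ < 2 such that for every parameter a with a₀ ≤ a ≤ 2, every point x ∈ [−1,1] and every integer n ≥ 1 such that φ_a^j(x) ∈ [−1,1] \ (−δ,δ) for all 0 ≤ j ≤ n−1, the derivative of the n-th iterate satisfies |(φ_a^n)'(x)| ≥ δ·λ^n; if moreover φ_a^n(x) ∈ (−δ,δ), then |(φ_a^n)'(x)| ≥ λ^n. -/
open Set

/-- The quadratic family `φ_a(x) = 1 - a x²`. -/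
noncomputable def qmap (a : ℝ) : ℝ → ℝ := fun x => 1 - a * x ^ 2

/-!
For the Chebyshev map `φ₂` one has `1 - φ₂(y)² = φ₂'(y)² (1 - y²) / 4`, so `1 - y²` is an exact
weight in which the squared derivative expands by `4`. For `a` close to `2` the same weight,
truncated below at `δ²` and set to `1` on the critical neighbourhood `(-δ, δ)`, still expands by
`(7/5)²` along every step of an orbit that avoids `(-δ, δ)`. The weight lies in `[δ², 1]` and
equals `1` on `(-δ, δ)`, which gives both bounds.
-/

theorem deriv_iterate_succ {𝕜 : Type*} [NontriviallyNormedField 𝕜] {f : 𝕜 → 𝕜}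
    (hf : Differentiable 𝕜 f) (n : ℕ) (x : 𝕜) :
    deriv f^[n + 1] x = deriv f (f^[n] x) * deriv f^[n] x := by
  rw [Function.iterate_succ', deriv_comp x hf.differentiableAt (hf.iterate n).differentiableAt]

theorem pow_sq_mul_weight_iterate_le {f W : ℝ → ℝ} (hf : Differentiable ℝ f) {lam x : ℝ}
    {n : ℕ} (hstep : ∀ j < n, lam ^ 2 * W (f (f^[j] x)) ≤ deriv f (f^[j] x) ^ 2 * W (f^[j] x)) :
    (lam ^ n) ^ 2 * W (f^[n] x) ≤ deriv f^[n] x ^ 2 * W x := by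
  induction n with
  | zero => simp
  | succ m ih =>
    have ih := ih fun j hj => hstep j (by omega)
    rw [deriv_iterate_succ hf, Function.iterate_succ_apply']
    calc (lam ^ (m + 1)) ^ 2 * W (f (f^[m] x))
        = (lam ^ m) ^ 2 * (lam ^ 2 * W (f (f^[m] x))) := by ring
      _ ≤ (lam ^ m) ^ 2 * (deriv f (f^[m] x) ^ 2 * W (f^[m] x)) := by
        gcongr ?_ * ?_
        exact hstep m (by omega)
      _ = deriv f (f^[m] x) ^ 2 * ((lam ^ m) ^ 2 * W (f^[m] x)) := by ring
      _ ≤ deriv f (f^[m] x) ^ 2 * (deriv f^[m] x ^ 2 * W x) := by gcongr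
      _ = (deriv f (f^[m] x) * deriv f^[m] x) ^ 2 * W x := by ring

theorem qmap_differentiable (a : ℝ) : Differentiable ℝ (qmap a) := by
  unfold qmap; fun_prop

theorem deriv_qmap (a y : ℝ) : deriv (qmap a) y = -(2 * a * y) := by
  unfold qmap
  simp [mul_comm, mul_left_comm]

theorem sq_le_sq_of_notMem_Ioo {δ z : ℝ} (hδ : 0 ≤ δ) (hz : z ∉ Ioo (-δ) δ) : δ ^ 2 ≤ z ^ 2 := by
  by_contra! h
  exact hz (abs_lt.mp (abs_lt_of_sq_lt_sq h hδ))

noncomputable def expansionWeight (δ z : ℝ) : ℝ :=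
  if z ∈ Ioo (-δ) δ then 1 else max (1 - z ^ 2) (δ ^ 2)

theorem sq_le_expansionWeight {δ : ℝ} (hδ : δ ≤ 1) (z : ℝ) : δ ^ 2 ≤ expansionWeight δ z := by
  unfold expansionWeight
  split_ifs with hz
  · nlinarith [hz.1, hz.2]
  · exact le_max_right _ _

theorem expansionWeight_le_one {δ z : ℝ} (hδ : 0 ≤ δ) (hz : z ∈ Icc (-1 : ℝ) 1 \ Ioo (-δ) δ) :
    expansionWeight δ z ≤ 1 := by
  have hδz := sq_le_sq_of_notMem_Ioo hδ hz.2
  rw [expansionWeight, if_neg hz.2]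
  exact max_le (by nlinarith) (by nlinarith [hz.1.1, hz.1.2])

theorem expansionWeight_of_mem {δ z : ℝ} (hz : z ∈ Ioo (-δ) δ) : expansionWeight δ z = 1 :=
  if_pos hz

-- `s` stands for `y²`, so that `4 a² s = φ_a'(y)²` and `1 - a s = φ_a(y)`.
theorem quadratic_step_far {δ a s : ℝ} (ha : 2 - δ ^ 2 / 100 ≤ a) (ha2 : a ≤ 2)
    (hs : δ ^ 2 ≤ s) (hs1 : s ≤ 1) :
    49 / 25 * max (1 - (1 - a * s) ^ 2) (δ ^ 2) ≤ 4 * a ^ 2 * s * max (1 - s) (δ ^ 2) := by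
  have hδ2 : δ ^ 2 ≤ 1 := hs.trans hs1
  have ha1 : 199 / 100 ≤ a := by linarith
  have hs0 : 0 ≤ s := (sq_nonneg δ).trans hs
  rw [mul_max_of_nonneg _ _ (by norm_num)]
  refine max_le ?_ ?_
  · have hmain : 49 / 25 * (2 - a * s) ≤ 4 * a * max (1 - s) (δ ^ 2) := by
      rcases le_or_gt (δ ^ 2 / 100) (1 - s) with hfar | hclose
      · have hgap : 2 - a * s ≤ (a + 1) * (1 - s) := by nlinarith
        nlinarith [le_max_left (1 - s) (δ ^ 2)]
      · have hgap : 2 - a * s ≤ 3 * δ ^ 2 / 100 := by nlinarith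
        nlinarith [le_max_right (1 - s) (δ ^ 2)]
    calc 49 / 25 * (1 - (1 - a * s) ^ 2) = a * s * (49 / 25 * (2 - a * s)) := by ring
      _ ≤ a * s * (4 * a * max (1 - s) (δ ^ 2)) := by gcongr
      _ = 4 * a ^ 2 * s * max (1 - s) (δ ^ 2) := by ring
  · have hhalf : δ ^ 2 / 2 ≤ s * max (1 - s) (δ ^ 2) := by
      rcases le_or_gt s (1 / 2) with hsmall | hlarge
      · nlinarith [le_max_left (1 - s) (δ ^ 2)]
      · nlinarith [le_max_right (1 - s) (δ ^ 2)]
    have ha2' : 49 / 25 ≤ 2 * a ^ 2 := by nlinarith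
    nlinarith [mul_le_mul_of_nonneg_left hhalf (sq_nonneg (2 * a)),
      mul_le_mul_of_nonneg_right ha2' (sq_nonneg δ)]

theorem quadratic_step_near {δ a s : ℝ} (ha : 2 - δ ^ 2 / 100 ≤ a) (ha2 : a ≤ 2)
    (hs : δ ^ 2 ≤ s) (hs1 : s ≤ 1) (hnear : |a * s - 1| < δ) :
    49 / 25 ≤ 4 * a ^ 2 * s * max (1 - s) (δ ^ 2) := by
  have ha1 : 199 / 100 ≤ a := by linarith
  have hs0 : 0 ≤ s := (sq_nonneg δ).trans hs
  rcases le_or_gt δ (7 / 10) with hsmall | hlarge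
  · have hδ2 : δ ^ 2 ≤ 49 / 100 := by nlinarith [(abs_nonneg _).trans_lt hnear]
    have hsq : (a * s - 1) ^ 2 ≤ δ ^ 2 := by
      rw [← sq_abs]; exact pow_le_pow_left₀ (abs_nonneg _) hnear.le 2
    have hdrift : a * s * (2 - a) ≤ 2 * (δ ^ 2 / 100) :=
      mul_le_mul (by nlinarith) (by linarith) (by linarith) (by norm_num)
    have hbound : 49 / 25 ≤ 4 * a ^ 2 * s * (1 - s) := by
      have hid : 4 * a ^ 2 * s * (1 - s) = 4 * (1 - (a * s - 1) ^ 2) - 4 * (a * s * (2 - a)) := by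
        ring
      linarith
    exact hbound.trans (by gcongr; exact le_max_left _ _)
  · have hδ2 : 49 / 100 ≤ δ ^ 2 := by nlinarith
    have hsδ : 49 / 100 * (49 / 100) ≤ s * δ ^ 2 := mul_le_mul (hδ2.trans hs) hδ2 (by norm_num) hs0
    have hbound : 49 / 25 ≤ 4 * a ^ 2 * s * δ ^ 2 := by nlinarith
    exact hbound.trans (by gcongr; exact le_max_right _ _)

theorem expansionWeight_qmap_le {δ a y : ℝ} (hδ : 0 ≤ δ) (ha : 2 - δ ^ 2 / 100 ≤ a) (ha2 : a ≤ 2)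
    (hy : y ∈ Icc (-1 : ℝ) 1 \ Ioo (-δ) δ) :
    (7 / 5) ^ 2 * expansionWeight δ (qmap a y) ≤ deriv (qmap a) y ^ 2 * expansionWeight δ y := by
  have hs := sq_le_sq_of_notMem_Ioo hδ hy.2
  have hs1 : y ^ 2 ≤ 1 := by nlinarith [hy.1.1, hy.1.2]
  have hderiv : deriv (qmap a) y ^ 2 = 4 * a ^ 2 * y ^ 2 := by rw [deriv_qmap]; ring
  unfold expansionWeight
  rw [hderiv, if_neg hy.2, qmap]
  split_ifs with hnear
  · have hnear' : |a * y ^ 2 - 1| < δ := abs_lt.mpr ⟨by linarith [hnear.2], by linarith [hnear.1]⟩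
    linarith [quadratic_step_near ha ha2 hs hs1 hnear']
  · linarith [quadratic_step_far ha ha2 hs hs1]

/-- Uniform expansion outside a critical neighbourhood for the quadratic family. -/
theorem uniform_expansion_outside_critical_neighbourhood :
    ∃ lam : ℝ, 1 < lam ∧
      ∀ δ : ℝ, 0 < δ →
        ∃ a₀ : ℝ, a₀ < 2 ∧
          ∀ a : ℝ, a₀ ≤ a → a ≤ 2 →
            ∀ x ∈ Icc (-1 : ℝ) 1, ∀ n : ℕ, 1 ≤ n →
              (∀ j < n, (qmap a)^[j] x ∈ Icc (-1 : ℝ) 1 \ Ioo (-δ) δ) →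
                δ * lam ^ n ≤ |deriv ((qmap a)^[n]) x| ∧
                  ((qmap a)^[n] x ∈ Ioo (-δ) δ →
                    lam ^ n ≤ |deriv ((qmap a)^[n]) x|) := by
  refine ⟨7 / 5, by norm_num, fun δ hδ => ⟨2 - δ ^ 2 / 100, sub_lt_self 2 (by positivity), ?_⟩⟩
  intro a ha ha2 x _ n hn horbit
  have hx : x ∈ Icc (-1 : ℝ) 1 \ Ioo (-δ) δ := horbit 0 (by omega)
  have hδ1 : δ ≤ 1 := by
    by_contra! h
    exact hx.2 ⟨by linarith [hx.1.1], by linarith [hx.1.2]⟩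
  have hgrowth := pow_sq_mul_weight_iterate_le (qmap_differentiable a) fun j hj =>
    expansionWeight_qmap_le hδ.le ha ha2 (horbit j hj)
  have hbound : ((7 / 5) ^ n) ^ 2 * expansionWeight δ ((qmap a)^[n] x) ≤
      |deriv (qmap a)^[n] x| ^ 2 := by
    rw [sq_abs]
    calc _ ≤ _ := hgrowth
      _ ≤ deriv (qmap a)^[n] x ^ 2 * 1 := by gcongr; exact expansionWeight_le_one hδ.le hx
      _ = _ := mul_one _
  constructor
  · refine (sq_le_sq₀ (by positivity) (abs_nonneg _)).mp ?_
    calc (δ * (7 / 5) ^ n) ^ 2 = ((7 / 5) ^ n) ^ 2 * δ ^ 2 := by ring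
      _ ≤ ((7 / 5) ^ n) ^ 2 * expansionWeight δ ((qmap a)^[n] x) := by
        gcongr; exact sq_le_expansionWeight hδ1 _
      _ ≤ _ := hbound
  · intro hnear
    refine (sq_le_sq₀ (by positivity) (abs_nonneg _)).mp ?_
    simpa [expansionWeight_of_mem hnear] using hbound
end

section
/- There exist constants λ > 1 and C > 0 such that for every δ > 0 there exist a₀ < 2 and b₀ > 0 with the following property. Let a ∈ [a₀, 2], b ∈ (0, b₀], and let Φ be a Hénon-like map with parameters (a, b). Then for every z ∈ Q and every n ≥ 1 such that Φ^j(z) ∈ Q \ Δ for all 0 ≤ j ≤ n−1, and for every nonzero vector w ∈ ℝ² of slope at most 1/10: ‖DΦ^n(z) w‖ ≥ δ·λ^n·‖w‖, and if in addition Φ^n(z) ∈ Δ then ‖DΦ^n(z) w‖ ≥ λ^n·‖w‖. Moreover there exists a unit vector e ∈ ℝ² with ‖DΦ^n(z) e‖ ≤ (C·b)^n. -/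
/-!
Along an orbit segment in `Q \ Δ` the derivative of `Φ` is `u ↦ (-2a xⱼ u₀, 0) + DR u` with
`2a|xⱼ| > 2aδ ≫ b`. Hence the cone of slopes `≤ 1/10` is invariant, and the first coordinate of a
vector in it is multiplied by at least `κⱼ = 2a|xⱼ| - 1.005 b` at each step.

The first coordinates `xⱼ` form a `b`-pseudo-orbit of `f(x) = 1 - a x²`. For `a = 2` this map is
conjugate to angle doubling by `x = cos θ`, and the weight `1 - x²` satisfies
`4 (1 - f(x)²) = f'(x)² (1 - x²)`. Truncated below at `δ²`, the weight still gains a factor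
`1.9294` per step when `a` is close to `2` and `b` is small, so `(∏ κⱼ)²` is at least `1.9294ⁿ`
times the final weight, which is `≥ δ²`, and `≥ 3/4` if the orbit ends in `Δ`.

Finally `|det DΦ| = O(b)`, so the vector whose image is orthogonal to the image of the expanded
direction `e₀` is contracted by `O(b)` per step.
-/

open Set

/-- The plane with the Euclidean norm. -/
abbrev E2 := EuclideanSpace ℝ (Fin 2)

namespace HenonLike

local notation "e₀" => EuclideanSpace.single (0 : Fin 2) (1 : ℝ)
local notation "e₁" => EuclideanSpace.single (1 : Fin 2) (1 : ℝ)

theorem fderiv_iterate_succ {𝕜 E : Type*} [NontriviallyNormedField 𝕜] [NormedAddCommGroup E]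
    [NormedSpace 𝕜 E] {f : E → E} (hf : Differentiable 𝕜 f) (n : ℕ) (z : E) :
    fderiv 𝕜 f^[n + 1] z = (fderiv 𝕜 f (f^[n] z)).comp (fderiv 𝕜 f^[n] z) := by
  rw [Function.iterate_succ']
  exact fderiv_comp z (hf _) (hf.iterate n z)

theorem norm_sq_eq_fin_two (u : E2) : ‖u‖ ^ 2 = u 0 ^ 2 + u 1 ^ 2 := by
  simp [EuclideanSpace.real_norm_sq_eq, Fin.sum_univ_two]

theorem abs_apply_le_norm (u : E2) (i : Fin 2) : |u i| ≤ ‖u‖ :=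
  PiLp.norm_apply_le u i

theorem abs_apply_le_of_opNorm_le {B : E2 →L[ℝ] E2} {b : ℝ} (hB : ‖B‖ ≤ b) (u : E2)
    (i : Fin 2) : |B u i| ≤ b * ‖u‖ :=
  (abs_apply_le_norm (B u) i).trans (B.le_of_opNorm_le hB u)

theorem norm_le_of_abs_apply_one_le {u : E2} (hu : |u 1| ≤ |u 0| / 10) :
    ‖u‖ ≤ 1.005 * |u 0| := by
  refine le_of_sq_le_sq ?_ (by positivity)
  rw [norm_sq_eq_fin_two]
  nlinarith [sq_abs (u 0), sq_abs (u 1), abs_nonneg (u 0), abs_nonneg (u 1)]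

theorem det_eq_fin_two (f : E2 →L[ℝ] E2) : f.det = f e₀ 0 * f e₁ 1 - f e₁ 0 * f e₀ 1 := by
  rw [ContinuousLinearMap.det,
    ← LinearMap.det_toMatrix (EuclideanSpace.basisFun (Fin 2) ℝ).toBasis, Matrix.det_fin_two]
  simp [LinearMap.toMatrix_apply]

/-- Choose `e` with `f e ⊥ f e₀`; then `f e₀, f e` span a rectangle of area `|det f| ‖e‖`. -/
theorem exists_norm_eq_one_norm_mul_le_abs_det (f : E2 →L[ℝ] E2) :
    ∃ e : E2, ‖e‖ = 1 ∧ ‖f e‖ * ‖f e₀‖ ≤ |f.det| := by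
  by_cases h0 : f e₀ = 0
  · exact ⟨e₀, by simp, by simp [h0]⟩
  set p := f e₀ 0
  set q := f e₀ 1
  set r := f e₁ 0
  set s := f e₁ 1
  set v : E2 := (-(p * r + q * s)) • e₀ + (p ^ 2 + q ^ 2) • e₁
  have hpq : ‖f e₀‖ ^ 2 = p ^ 2 + q ^ 2 := norm_sq_eq_fin_two _
  have hpos : 0 < ‖f e₀‖ := norm_pos_iff.mpr h0
  have hfv : ‖f v‖ = |f.det| * ‖f e₀‖ := by
    refine (sq_eq_sq₀ (norm_nonneg _) (by positivity)).mp ?_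
    rw [mul_pow, hpq, sq_abs, det_eq_fin_two, norm_sq_eq_fin_two]
    simp only [v, map_add, map_smul, PiLp.add_apply, PiLp.smul_apply, smul_eq_mul]
    ring
  have hv : ‖f e₀‖ ^ 2 ≤ ‖v‖ := by
    calc ‖f e₀‖ ^ 2 = |v 1| := by simp [v, hpq, abs_of_nonneg, add_nonneg, sq_nonneg]
      _ ≤ ‖v‖ := abs_apply_le_norm v 1
  have hv0 : 0 < ‖v‖ := lt_of_lt_of_le (by positivity) hv
  refine ⟨‖v‖⁻¹ • v, by simp [norm_smul, hv0.ne'], ?_⟩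
  rw [map_smul, norm_smul, norm_inv, norm_norm, hfv]
  calc ‖v‖⁻¹ * (|f.det| * ‖f e₀‖) * ‖f e₀‖ = |f.det| * (‖f e₀‖ ^ 2 / ‖v‖) := by ring
    _ ≤ |f.det| * 1 := by gcongr; exact (div_le_one hv0).mpr hv
    _ = |f.det| := mul_one _

noncomputable def henonLinear (c : ℝ) (B : E2 →L[ℝ] E2) : E2 →L[ℝ] E2 :=
  (c • EuclideanSpace.proj (0 : Fin 2) : E2 →L[ℝ] ℝ).smulRight e₀ + B

@[simp]
theorem henonLinear_apply_zero (c : ℝ) (B : E2 →L[ℝ] E2) (u : E2) :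
    henonLinear c B u 0 = c * u 0 + B u 0 := by
  simp [henonLinear]

@[simp]
theorem henonLinear_apply_one (c : ℝ) (B : E2 →L[ℝ] E2) (u : E2) :
    henonLinear c B u 1 = B u 1 := by
  simp [henonLinear]

section HenonLinear
variable {b c : ℝ} {B : E2 →L[ℝ] E2}

theorem henonLinear_cone (hB : ‖B‖ ≤ b) (hc : 12 * b ≤ |c|) {u : E2}
    (hu : |u 1| ≤ |u 0| / 10) :
    (|c| - 1.005 * b) * |u 0| ≤ |henonLinear c B u 0| ∧
      |henonLinear c B u 1| ≤ |henonLinear c B u 0| / 10 := by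
  have hb : 0 ≤ b := (norm_nonneg B).trans hB
  have hBu : ∀ i, |B u i| ≤ 1.005 * b * |u 0| := fun i =>
    (abs_apply_le_of_opNorm_le hB u i).trans (by nlinarith [norm_le_of_abs_apply_one_le hu])
  have hlow : (|c| - 1.005 * b) * |u 0| ≤ |henonLinear c B u 0| := by
    rw [henonLinear_apply_zero]
    have := abs_sub_abs_le_abs_sub (c * u 0) (-B u 0)
    rw [sub_neg_eq_add, abs_neg, abs_mul] at this
    nlinarith [hBu 0]
  refine ⟨hlow, ?_⟩
  rw [henonLinear_apply_one]
  nlinarith [hBu 1, abs_nonneg (u 0)]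

theorem abs_det_henonLinear_le (hB : ‖B‖ ≤ b) : |(henonLinear c B).det| ≤ b * (|c| + 2 * b) := by
  have hb : 0 ≤ b := (norm_nonneg B).trans hB
  have h : ∀ i j : Fin 2, |B (EuclideanSpace.single i 1) j| ≤ b := fun i j => by
    simpa using abs_apply_le_of_opNorm_le hB (EuclideanSpace.single i 1) j
  have hdet : (henonLinear c B).det = (c + B e₀ 0) * B e₁ 1 - B e₁ 0 * B e₀ 1 := by
    simp [det_eq_fin_two]
  rw [hdet]
  have h00 := h 0 0; have h01 := h 0 1; have h10 := h 1 0; have h11 := h 1 1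
  calc _ ≤ |(c + B e₀ 0) * B e₁ 1| + |B e₁ 0 * B e₀ 1| := abs_sub _ _
    _ ≤ (|c| + b) * b + b * b := by
      rw [abs_mul, abs_mul]
      gcongr
      exact (abs_add_le _ _).trans (by linarith)
    _ = b * (|c| + 2 * b) := by ring

end HenonLinear

structure IsHenonCocycle (c : ℕ → ℝ) (B : ℕ → E2 →L[ℝ] E2) (M : ℕ → E2 →L[ℝ] E2) : Prop where
  zero : M 0 = .id ℝ E2
  succ : ∀ m, M (m + 1) = (henonLinear (c m) (B m)).comp (M m)

namespace IsHenonCocycle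
variable {b : ℝ} {c : ℕ → ℝ} {B : ℕ → E2 →L[ℝ] E2} {M : ℕ → E2 →L[ℝ] E2} {n : ℕ}

theorem cone (hM : IsHenonCocycle c B M) (hB : ∀ j < n, ‖B j‖ ≤ b)
    (hc : ∀ j < n, 12 * b ≤ |c j|) {u : E2} (hu : |u 1| ≤ |u 0| / 10) :
    ∀ m ≤ n, (∏ j ∈ Finset.range m, (|c j| - 1.005 * b)) * |u 0| ≤ |M m u 0| ∧
      |M m u 1| ≤ |M m u 0| / 10 := by
  intro m
  induction m with
  | zero => simpa [hM.zero] using hu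
  | succ m ih =>
    intro hm
    obtain ⟨hgrowth, hslope⟩ := ih (by omega)
    obtain ⟨hstep, hslope'⟩ := henonLinear_cone (hB m (by omega)) (hc m (by omega)) hslope
    have hfac : 0 ≤ |c m| - 1.005 * b := by
      linarith [hc m (by omega), (norm_nonneg (B m)).trans (hB m (by omega))]
    rw [hM.succ, Finset.prod_range_succ]
    refine ⟨?_, hslope'⟩
    calc _ = (|c m| - 1.005 * b) * ((∏ j ∈ Finset.range m, (|c j| - 1.005 * b)) * |u 0|) := by
          ring
      _ ≤ (|c m| - 1.005 * b) * |M m u 0| := by gcongr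
      _ ≤ _ := hstep

theorem abs_det_le (hM : IsHenonCocycle c B M) (hB : ∀ j < n, ‖B j‖ ≤ b) :
    |(M n).det| ≤ ∏ j ∈ Finset.range n, b * (|c j| + 2 * b) := by
  induction n with
  | zero => simp [hM.zero, ContinuousLinearMap.det]
  | succ m ih =>
    rw [hM.succ, ContinuousLinearMap.det, ContinuousLinearMap.toLinearMap_comp, LinearMap.det_comp,
      abs_mul, Finset.prod_range_succ, mul_comm]
    refine mul_le_mul (ih fun j hj => hB j (by omega)) (abs_det_henonLinear_le (hB m (by omega)))
      (abs_nonneg _) (Finset.prod_nonneg fun j hj => ?_)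
    have := (norm_nonneg (B j)).trans (hB j (by simp at hj; omega))
    positivity

theorem norm_ge (hM : IsHenonCocycle c B M) (hB : ∀ j < n, ‖B j‖ ≤ b)
    (hc : ∀ j < n, 12 * b ≤ |c j|) {u : E2} (hu : |u 1| ≤ |u 0| / 10) :
    (∏ j ∈ Finset.range n, (|c j| - 1.005 * b)) * ‖u‖ ≤ 1.005 * ‖M n u‖ := by
  have hfac : 0 ≤ ∏ j ∈ Finset.range n, (|c j| - 1.005 * b) :=
    Finset.prod_nonneg fun j hj => by
      have hj := Finset.mem_range.mp hj
      linarith [hc j hj, (norm_nonneg (B j)).trans (hB j hj)]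
  calc _ ≤ (∏ j ∈ Finset.range n, (|c j| - 1.005 * b)) * (1.005 * |u 0|) := by
        gcongr; exact norm_le_of_abs_apply_one_le hu
    _ = 1.005 * ((∏ j ∈ Finset.range n, (|c j| - 1.005 * b)) * |u 0|) := by ring
    _ ≤ 1.005 * ‖M n u‖ := by
        gcongr
        exact (hM.cone hB hc hu n le_rfl).1.trans (abs_apply_le_norm _ 0)

theorem exists_norm_le (hM : IsHenonCocycle c B M) (hb : 0 < b) (hB : ∀ j < n, ‖B j‖ ≤ b)
    (hc : ∀ j < n, 12 * b ≤ |c j|) : ∃ e : E2, ‖e‖ = 1 ∧ ‖M n e‖ ≤ (2 * b) ^ n := by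
  set P := ∏ j ∈ Finset.range n, (|c j| - 1.005 * b)
  have hP : 0 < P := Finset.prod_pos fun j hj => by linarith [hc j (Finset.mem_range.mp hj)]
  have hMe₀ : P ≤ ‖M n e₀‖ := by
    simpa using (hM.cone hB hc (u := e₀) (by simp) n le_rfl).1.trans (abs_apply_le_norm _ 0)
  have hdet : |(M n).det| ≤ (2 * b) ^ n * P := by
    calc |(M n).det| ≤ ∏ j ∈ Finset.range n, b * (|c j| + 2 * b) := hM.abs_det_le hB
      _ ≤ ∏ j ∈ Finset.range n, 2 * b * (|c j| - 1.005 * b) :=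
        Finset.prod_le_prod (fun _ _ => by positivity) fun j hj => by
          nlinarith [hc j (Finset.mem_range.mp hj)]
      _ = (2 * b) ^ n * P := by rw [Finset.prod_mul_distrib, Finset.prod_const, Finset.card_range]
  obtain ⟨e, he, hfe⟩ := exists_norm_eq_one_norm_mul_le_abs_det (M n)
  refine ⟨e, he, le_of_mul_le_mul_right ?_ hP⟩
  calc ‖M n e‖ * P ≤ ‖M n e‖ * ‖M n e₀‖ := by gcongr
    _ ≤ _ := hfe.trans hdet

end IsHenonCocycle

noncomputable def henonMap (a : ℝ) (R : E2 → E2) (z : E2) : E2 :=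
  (WithLp.equiv 2 (Fin 2 → ℝ)).symm ![1 - a * (z 0) ^ 2, 0] + R z

theorem henonMap_eq (a : ℝ) (R : E2 → E2) :
    henonMap a R = fun z => (1 - a * (z 0) ^ 2) • e₀ + R z := by
  ext z i; fin_cases i <;> simp [henonMap]

theorem abs_henonMap_apply_zero_sub_le {a b : ℝ} {R : E2 → E2} (hR : ∀ y, ‖R y‖ ≤ b) (y : E2) :
    |henonMap a R y 0 - (1 - a * (y 0) ^ 2)| ≤ b := by
  have : henonMap a R y 0 = 1 - a * (y 0) ^ 2 + R y 0 := by simp [henonMap_eq]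
  rw [this, add_sub_cancel_left]
  exact (abs_apply_le_norm _ 0).trans (hR y)

theorem hasFDerivAt_henonMap {a : ℝ} {R : E2 → E2} (hR : Differentiable ℝ R) (y : E2) :
    HasFDerivAt (henonMap a R) (henonLinear (-(2 * a * y 0)) (fderiv ℝ R y)) y := by
  have hp : HasFDerivAt (fun z : E2 => z 0) (EuclideanSpace.proj (0 : Fin 2) : E2 →L[ℝ] ℝ) y :=
    (EuclideanSpace.proj (0 : Fin 2) : E2 →L[ℝ] ℝ).hasFDerivAt
  have hq : HasFDerivAt (fun z : E2 => 1 - a * (z 0) ^ 2)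
      (-(2 * a * y 0) • (EuclideanSpace.proj (0 : Fin 2) : E2 →L[ℝ] ℝ)) y := by
    refine (((hp.pow 2).const_mul a).const_sub 1).congr_fderiv ?_
    ext u; simp; ring
  rw [henonMap_eq]
  exact (hq.smul_const e₀).add (hR y).hasFDerivAt

theorem isHenonCocycle_fderiv_iterate {a : ℝ} {R : E2 → E2} (hR : Differentiable ℝ R) (z : E2) :
    IsHenonCocycle (fun j => -(2 * a * (henonMap a R)^[j] z 0))
      (fun j => fderiv ℝ R ((henonMap a R)^[j] z)) (fun m => fderiv ℝ (henonMap a R)^[m] z) where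
  zero := fderiv_id
  succ m := by
    rw [fderiv_iterate_succ (fun y => (hasFDerivAt_henonMap hR y).differentiableAt),
      (hasFDerivAt_henonMap hR _).fderiv]

section QuadraticStep
variable {δ a b A y : ℝ}

theorem one_sub_sq_image_le (hδ : 0 < δ) (hδ' : δ ≤ 1) (ha : 2 - δ ^ 4 / 10000 ≤ a) (ha' : a ≤ 2)
    (hb : b ≤ δ ^ 4 / 10000) (hA : 0 ≤ A) (hA' : A ≤ 2) (hy : |y - (1 - a * A ^ 2)| ≤ b) :
    1 - y ^ 2 ≤ 2 * a * A ^ 2 * (1 - A ^ 2) + 0.006 * δ ^ 4 := by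
  obtain ⟨hy₁, hy₂⟩ := abs_le.mp hy
  have hδ4 : δ ^ 4 ≤ 1 := pow_le_one₀ hδ.le hδ'
  have hA2 : A ^ 2 ≤ 4 := by nlinarith
  have hA4 : a * A ^ 4 ≤ 32 := by nlinarith [pow_le_pow_left₀ (sq_nonneg A) hA2 2]
  have hsq : (y - (1 - a * A ^ 2)) ^ 2 ≤ δ ^ 4 / 10000 := by
    nlinarith [sq_abs (y - (1 - a * A ^ 2)), abs_nonneg (y - (1 - a * A ^ 2))]
  have hid : 1 - y ^ 2 = 2 * a * A ^ 2 * (1 - A ^ 2) + (2 - a) * (a * A ^ 4)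
      - 2 * (1 - a * A ^ 2) * (y - (1 - a * A ^ 2)) - (y - (1 - a * A ^ 2)) ^ 2 := by ring
  have ha0 : 0 ≤ a := by linarith
  have haA2 : 0 ≤ a * A ^ 2 := by positivity
  nlinarith [mul_le_mul (by linarith : 2 - a ≤ δ ^ 4 / 10000) hA4 (by positivity) (by positivity)]

theorem sq_expansion_ge (ha : 1.9999 ≤ a) (ha' : a ≤ 2) (hb : 0 < b) (hb' : b ≤ δ ^ 4 / 10000)
    (hA' : A ≤ 2) :
    4 * a ^ 2 * A ^ 2 - 0.002 * δ ^ 4 ≤ (2 * a * A - 1.005 * b) ^ 2 := by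
  have haA : a * A * b ≤ 4 * b := mul_le_mul_of_nonneg_right (by nlinarith) hb.le
  nlinarith [sq_nonneg b]

theorem sq_lt_one_sub_sq_image (hδ : 0 < δ) (ha : 1.9999 ≤ a) (ha' : a ≤ 2)
    (hb : b ≤ δ ^ 4 / 10000) (hA : δ ^ 2 ≤ A ^ 2) (hA' : A ^ 2 ≤ 0.1225)
    (hy : |y - (1 - a * A ^ 2)| ≤ b) :
    δ ^ 2 < 1 - y ^ 2 := by
  obtain ⟨hy₁, hy₂⟩ := abs_le.mp hy
  have hδ2 : 0 < δ ^ 2 := by positivity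
  have hb2 : b ≤ δ ^ 2 / 40000 := by nlinarith
  have hlo : 1.99 * δ ^ 2 ≤ 1 - y := by nlinarith
  have hhi : 1.7549 ≤ 1 + y := by nlinarith
  nlinarith [mul_le_mul hlo hhi (by norm_num) (by linarith)]

theorem one_sub_sq_step_of_sq_le (hδ : 0 < δ) (ha : 1.9999 ≤ a)
    (hy : 1 - y ^ 2 ≤ 2 * a * A ^ 2 * (1 - A ^ 2) + 0.006 * δ ^ 4)
    (hexp : 4 * a ^ 2 * A ^ 2 - 0.002 * δ ^ 4 ≤ (2 * a * A - 1.005 * b) ^ 2)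
    (hA : δ ^ 2 ≤ A ^ 2) (hA' : δ ^ 2 ≤ 1 - A ^ 2) :
    1.9294 * (1 - y ^ 2) ≤ (2 * a * A - 1.005 * b) ^ 2 * (1 - A ^ 2) := by
  have hδ2 : 0 < δ ^ 2 := by positivity
  have hcoef : (8.28 : ℝ) ≤ 4 * a ^ 2 - 3.8588 * a := by nlinarith
  have hAA : δ ^ 4 ≤ A ^ 2 * (1 - A ^ 2) := by nlinarith [mul_le_mul hA hA' hδ2.le (sq_nonneg A)]
  have hA1 : 1 - A ^ 2 ≤ 1 := by nlinarith
  nlinarith [mul_le_mul_of_nonneg_right hexp (hδ2.le.trans hA'),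
    mul_le_mul hcoef hAA (by positivity) (by linarith), pow_pos hδ 4]

theorem one_sub_sq_step_of_lt (hδ : 0 < δ) (hδ' : δ ≤ 1 / 2) (ha : 1.9999 ≤ a)
    (hy : 1 - y ^ 2 ≤ 2 * a * A ^ 2 * (1 - A ^ 2) + 0.006 * δ ^ 4)
    (hexp : 4 * a ^ 2 * A ^ 2 - 0.002 * δ ^ 4 ≤ (2 * a * A - 1.005 * b) ^ 2)
    (hA : 1 - A ^ 2 < δ ^ 2) (hA' : 0 ≤ 1 - A ^ 2) :
    1.9294 * (1 - y ^ 2) ≤ (2 * a * A - 1.005 * b) ^ 2 * δ ^ 2 := by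
  have hδ2 : 0 < δ ^ 2 := by positivity
  have hδ2' : δ ^ 2 ≤ 1 / 4 := by nlinarith
  have hδ4 : δ ^ 4 ≤ δ ^ 2 / 4 := by nlinarith
  have hcoef : (8.28 : ℝ) ≤ 4 * a ^ 2 - 3.8588 * a := by nlinarith
  have hA2 : 0.75 * δ ^ 2 ≤ A ^ 2 * δ ^ 2 := by nlinarith
  nlinarith [mul_le_mul_of_nonneg_left hA.le (by positivity : (0 : ℝ) ≤ 2 * a * A ^ 2),
    mul_le_mul hcoef hA2 (by positivity) (by linarith),
    mul_le_mul_of_nonneg_right hexp hδ2.le, pow_pos hδ 4]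

end QuadraticStep

noncomputable def lyapunov (δ x : ℝ) : ℝ := max (1 - x ^ 2) (δ ^ 2)

theorem lyapunov_step {δ a b A y : ℝ} (hδ : 0 < δ) (hδ' : δ ≤ 1 / 2) (ha : 2 - δ ^ 4 / 10000 ≤ a)
    (ha' : a ≤ 2) (hb : 0 < b) (hb' : b ≤ δ ^ 4 / 10000) (hA : δ ≤ A) (hA' : A ≤ 2)
    (hy : |y - (1 - a * A ^ 2)| ≤ b) :
    1.9294 * lyapunov δ y ≤ (2 * a * A - 1.005 * b) ^ 2 * lyapunov δ A := by
  have hδ4 : δ ^ 4 ≤ δ ^ 2 / 4 := by nlinarith [pow_le_pow_left₀ hδ.le hδ' 2]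
  have ha₁ : 1.9999 ≤ a := by nlinarith [pow_le_one₀ (n := 4) hδ.le (by linarith : δ ≤ 1)]
  have hδA : δ ^ 2 ≤ A ^ 2 := pow_le_pow_left₀ hδ.le hA 2
  have hexp := sq_expansion_ge ha₁ ha' hb hb' hA'
  have himage := one_sub_sq_image_le hδ (by linarith) ha ha' hb' (by linarith) hA' hy
  unfold lyapunov
  rcases le_or_gt (1 - y ^ 2) (δ ^ 2) with hy₁ | hy₁
  · -- `y` is near `±1`, so `A` is bounded away from `0` and the factor exceeds `√1.9294`
    rw [max_eq_right hy₁]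
    have hA₁ : 0.35 ≤ A := by
      by_contra! hA₁
      exact hy₁.not_gt (sq_lt_one_sub_sq_image hδ ha₁ ha' hb' hδA (by nlinarith) hy)
    have hfac : 1.3998 ≤ 2 * a * A - 1.005 * b := by
      nlinarith [pow_le_one₀ (n := 4) hδ.le (by linarith : δ ≤ 1)]
    have hfac2 : 1.9594 ≤ (2 * a * A - 1.005 * b) ^ 2 := by nlinarith
    nlinarith [mul_le_mul hfac2 (le_max_right (1 - A ^ 2) (δ ^ 2)) (by positivity) (sq_nonneg _)]
  rw [max_eq_left hy₁.le]
  rcases le_or_gt (δ ^ 2) (1 - A ^ 2) with hA₁ | hA₁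
  · rw [max_eq_left hA₁]
    exact one_sub_sq_step_of_sq_le hδ ha₁ himage hexp hδA hA₁
  rw [max_eq_right hA₁.le]
  rcases le_or_gt 0 (1 - A ^ 2) with hA₂ | hA₂
  · exact one_sub_sq_step_of_lt hδ hδ' ha₁ himage hexp hA₁ hA₂
  · nlinarith [mul_nonpos_of_nonneg_of_nonpos (by positivity : 0 ≤ 2 * a * A ^ 2) hA₂.le]

theorem mul_pow_le_pow {c r s : ℝ} (hr : 0 ≤ r) (hrs : r ≤ s) (h : c * r ≤ s) {n : ℕ} (hn : 1 ≤ n) :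
    c * r ^ n ≤ s ^ n := by
  obtain ⟨k, rfl⟩ := Nat.exists_eq_add_of_le' hn
  calc c * r ^ (k + 1) = c * r * r ^ k := by ring
    _ ≤ s * s ^ k := mul_le_mul h (pow_le_pow_left₀ hr hrs k) (by positivity) (hr.trans hrs)
    _ = s ^ (k + 1) := by ring

section PseudoOrbit
variable {δ a b : ℝ} {x : ℕ → ℝ} {n : ℕ}

theorem pow_mul_lyapunov_le_sq_prod (hδ : 0 < δ) (hδ' : δ ≤ 1 / 2) (ha : 2 - δ ^ 4 / 10000 ≤ a)
    (ha' : a ≤ 2) (hb : 0 < b) (hb' : b ≤ δ ^ 4 / 10000) (hx : ∀ j < n, δ < |x j| ∧ |x j| ≤ 2)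
    (horb : ∀ j < n, |x (j + 1) - (1 - a * x j ^ 2)| ≤ b) :
    1.9294 ^ n * lyapunov δ (x n) ≤ (∏ j ∈ Finset.range n, (2 * a * |x j| - 1.005 * b)) ^ 2 := by
  induction n with
  | zero =>
    simp only [pow_zero, one_mul, Finset.range_zero, Finset.prod_empty, one_pow]
    exact max_le (by nlinarith [sq_nonneg (x 0)]) (by nlinarith)
  | succ m ih =>
    have hstep := lyapunov_step hδ hδ' ha ha' hb hb' (hx m (by omega)).1.le (hx m (by omega)).2
      (y := x (m + 1)) (by simpa using horb m (by omega))
    have hl : lyapunov δ |x m| = lyapunov δ (x m) := by simp [lyapunov]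
    rw [hl] at hstep
    have ih' := ih (fun j hj => hx j (by omega)) (fun j hj => horb j (by omega))
    calc 1.9294 ^ (m + 1) * lyapunov δ (x (m + 1))
        = 1.9294 ^ m * (1.9294 * lyapunov δ (x (m + 1))) := by ring
      _ ≤ 1.9294 ^ m * ((2 * a * |x m| - 1.005 * b) ^ 2 * lyapunov δ (x m)) := by gcongr
      _ = (2 * a * |x m| - 1.005 * b) ^ 2 * (1.9294 ^ m * lyapunov δ (x m)) := by ring
      _ ≤ (2 * a * |x m| - 1.005 * b) ^ 2 *
            (∏ j ∈ Finset.range m, (2 * a * |x j| - 1.005 * b)) ^ 2 := by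
        gcongr
      _ = (∏ j ∈ Finset.range (m + 1), (2 * a * |x j| - 1.005 * b)) ^ 2 := by
        rw [Finset.prod_range_succ]; ring

theorem prod_ge_of_half_le (hδ : 1 / 2 ≤ δ) (hn : 1 ≤ n)
    (hfac : ∀ j < n, 3.999 * δ ≤ 2 * a * |x j| - 1.005 * b) :
    1.005 * (δ * 1.1 ^ n) ≤ ∏ j ∈ Finset.range n, (2 * a * |x j| - 1.005 * b) ∧
      1.005 * 1.1 ^ n ≤ ∏ j ∈ Finset.range n, (2 * a * |x j| - 1.005 * b) := by
  have h2δ : max 1 δ ≤ (2 * δ) ^ n :=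
    max_le (one_le_pow₀ (by linarith))
      ((by linarith : δ ≤ 2 * δ).trans (le_self_pow₀ (by linarith) (by omega)))
  have hP : 1.9995 ^ n * max 1 δ ≤ ∏ j ∈ Finset.range n, (2 * a * |x j| - 1.005 * b) :=
    calc 1.9995 ^ n * max 1 δ ≤ 1.9995 ^ n * (2 * δ) ^ n := by gcongr
      _ = ∏ j ∈ Finset.range n, 3.999 * δ := by
        rw [Finset.prod_const, Finset.card_range, ← mul_pow]; ring_nf
      _ ≤ _ := Finset.prod_le_prod (fun _ _ => by positivity) fun j hj =>
        hfac j (Finset.mem_range.mp hj)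
  have hrate : (1.005 : ℝ) * 1.1 ^ n ≤ 1.9995 ^ n :=
    mul_pow_le_pow (by norm_num) (by norm_num) (by norm_num) hn
  generalize ∏ j ∈ Finset.range n, (2 * a * |x j| - 1.005 * b) = P at *
  constructor
  · nlinarith [le_max_right 1 δ, pow_pos (by norm_num : (0 : ℝ) < 1.9995) n]
  · nlinarith [le_max_left 1 δ, pow_pos (by norm_num : (0 : ℝ) < 1.9995) n]

theorem prod_ge_of_le_half (hδ : 0 < δ) (hδ' : δ ≤ 1 / 2) (hn : 1 ≤ n)
    (ha : 2 - δ ^ 4 / 10000 ≤ a) (ha' : a ≤ 2) (hb : 0 < b) (hb' : b ≤ δ ^ 4 / 10000)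
    (hx : ∀ j < n, δ < |x j| ∧ |x j| ≤ 2) (horb : ∀ j < n, |x (j + 1) - (1 - a * x j ^ 2)| ≤ b) :
    1.005 * (δ * 1.1 ^ n) ≤ ∏ j ∈ Finset.range n, (2 * a * |x j| - 1.005 * b) ∧
      (|x n| ≤ δ → 1.005 * 1.1 ^ n ≤ ∏ j ∈ Finset.range n, (2 * a * |x j| - 1.005 * b)) := by
  have hsq := pow_mul_lyapunov_le_sq_prod hδ hδ' ha ha' hb hb' hx horb
  have hδ4 : δ ^ 4 ≤ δ := pow_le_of_le_one hδ.le (by linarith) (by norm_num)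
  have hP : 0 ≤ ∏ j ∈ Finset.range n, (2 * a * |x j| - 1.005 * b) :=
    Finset.prod_nonneg fun j hj => by
      nlinarith [(hx j (Finset.mem_range.mp hj)).1,
        pow_le_one₀ (n := 4) hδ.le (by linarith : δ ≤ 1)]
  -- `(1.005 ⋅ 1.1ⁿ)² = 1.010025 ⋅ 1.21ⁿ` and `1.010025 / 0.75 = 1.3467`
  have hrate : ((1.005 : ℝ) * 1.1 ^ n) ^ 2 ≤ 0.75 * 1.9294 ^ n := by
    have := mul_pow_le_pow (c := 1.3467) (r := 1.21) (s := 1.9294)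
      (by norm_num) (by norm_num) (by norm_num) hn
    have h121 : ((1.1 : ℝ) ^ n) ^ 2 = 1.21 ^ n := by
      rw [← pow_mul, mul_comm, pow_mul]; norm_num
    rw [mul_pow, h121]
    linarith
  generalize ∏ j ∈ Finset.range n, (2 * a * |x j| - 1.005 * b) = P at *
  have hlyap : lyapunov δ (x n) = max (1 - x n ^ 2) (δ ^ 2) := rfl
  constructor
  · refine (sq_le_sq₀ (by positivity) hP).mp ?_
    nlinarith [le_max_right (1 - x n ^ 2) (δ ^ 2), pow_pos (by norm_num : (0 : ℝ) < 1.9294) n]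
  · intro hxn
    refine (sq_le_sq₀ (by positivity) hP).mp ?_
    have : (0.75 : ℝ) ≤ lyapunov δ (x n) :=
      le_max_of_le_left (by nlinarith [sq_abs (x n), abs_nonneg (x n)])
    nlinarith [pow_pos (by norm_num : (0 : ℝ) < 1.9294) n]

end PseudoOrbit

noncomputable def tol (δ : ℝ) : ℝ := min δ (1 / 2) ^ 4 / 10000

theorem tol_pos {δ : ℝ} (hδ : 0 < δ) : 0 < tol δ := by
  unfold tol; have := lt_min hδ (by norm_num : (0 : ℝ) < 1 / 2); positivity

theorem tol_le {δ : ℝ} (hδ : 0 < δ) : tol δ ≤ δ / 10000 ∧ tol δ ≤ 1 / 160000 := by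
  have h₀ : 0 < min δ (1 / 2) := lt_min hδ (by norm_num)
  have h₁ : min δ (1 / 2) ≤ 1 / 2 := min_le_right _ _
  have h₄ : min δ (1 / 2) ^ 4 ≤ (1 / 2) ^ 4 := pow_le_pow_left₀ h₀.le h₁ 4
  have h₄' : min δ (1 / 2) ^ 4 ≤ min δ (1 / 2) :=
    pow_le_of_le_one h₀.le (h₁.trans (by norm_num)) (by norm_num)
  unfold tol
  constructor
  · linarith [min_le_left δ (1 / 2)]
  · linarith

theorem prod_ge_of_pseudoOrbit {δ a b : ℝ} {x : ℕ → ℝ} {n : ℕ} (hδ : 0 < δ) (hn : 1 ≤ n)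
    (ha : 2 - tol δ ≤ a) (ha' : a ≤ 2) (hb : 0 < b) (hb' : b ≤ tol δ)
    (hx : ∀ j < n, δ < |x j| ∧ |x j| ≤ 2) (horb : ∀ j < n, |x (j + 1) - (1 - a * x j ^ 2)| ≤ b) :
    1.005 * (δ * 1.1 ^ n) ≤ ∏ j ∈ Finset.range n, (2 * a * |x j| - 1.005 * b) ∧
      (|x n| ≤ δ → 1.005 * 1.1 ^ n ≤ ∏ j ∈ Finset.range n, (2 * a * |x j| - 1.005 * b)) := by
  rcases le_or_gt (1 / 2) δ with hδ' | hδ'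
  · obtain ⟨htδ, htc⟩ := tol_le hδ
    have hfac : ∀ j < n, 3.999 * δ ≤ 2 * a * |x j| - 1.005 * b := fun j hj => by
      nlinarith [(hx j hj).1]
    obtain ⟨h₁, h₂⟩ := prod_ge_of_half_le hδ' hn hfac
    exact ⟨h₁, fun _ => h₂⟩
  · have htol : tol δ = δ ^ 4 / 10000 := by rw [tol, min_eq_left hδ'.le]
    rw [htol] at ha hb'
    exact prod_ge_of_le_half hδ hδ'.le hn ha ha' hb hb' hx horb

theorem abs_neg_two_mul {a : ℝ} (ha : 0 ≤ a) (t : ℝ) : |-(2 * a * t)| = 2 * a * |t| := by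
  rw [abs_neg, abs_mul, abs_of_nonneg (by positivity : 0 ≤ 2 * a)]

section Orbit
variable {a b : ℝ} {R : E2 → E2} {z : E2} {n : ℕ}

theorem norm_fderiv_henonMap_iterate_ge (hR : Differentiable ℝ R)
    (hR1 : ∀ y, ‖fderiv ℝ R y‖ ≤ b) (ha : 0 ≤ a)
    (hc : ∀ j < n, 12 * b ≤ 2 * a * |(henonMap a R)^[j] z 0|) {w : E2}
    (hw : |w 1| ≤ |w 0| / 10) :
    (∏ j ∈ Finset.range n, (2 * a * |(henonMap a R)^[j] z 0| - 1.005 * b)) * ‖w‖ ≤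
      1.005 * ‖fderiv ℝ (henonMap a R)^[n] z w‖ := by
  have h := (isHenonCocycle_fderiv_iterate hR z).norm_ge
    (fun _ _ => hR1 _) (fun j hj => (abs_neg_two_mul ha _).symm ▸ hc j hj) hw
  simp only [abs_neg_two_mul ha] at h
  exact h

theorem exists_norm_fderiv_henonMap_iterate_le (hR : Differentiable ℝ R)
    (hR1 : ∀ y, ‖fderiv ℝ R y‖ ≤ b) (ha : 0 ≤ a) (hb : 0 < b)
    (hc : ∀ j < n, 12 * b ≤ 2 * a * |(henonMap a R)^[j] z 0|) :
    ∃ e : E2, ‖e‖ = 1 ∧ ‖fderiv ℝ (henonMap a R)^[n] z e‖ ≤ (2 * b) ^ n :=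
  (isHenonCocycle_fderiv_iterate hR z).exists_norm_le hb (fun _ _ => hR1 _)
    (fun j hj => (abs_neg_two_mul ha _).symm ▸ hc j hj)

end Orbit

end HenonLike

open HenonLike

/-- Uniform hyperbolicity of Hénon-like maps outside the critical strip `Δ`:
expansion of almost horizontal vectors and existence of a strongly contracted
direction. -/
theorem henon_like_uniform_hyperbolicity_outside_Delta :
    ∃ lam C : ℝ, 1 < lam ∧ 0 < C ∧
      ∀ δ : ℝ, 0 < δ →
        ∃ a₀ : ℝ, a₀ < 2 ∧ ∃ b₀ : ℝ, 0 < b₀ ∧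
          ∀ (a b : ℝ) (R : E2 → E2),
            a₀ ≤ a → a ≤ 2 → 0 < b → b ≤ b₀ →
            ContDiff ℝ 3 R →
            (∀ z : E2, ∀ k : ℕ, k ≤ 3 → ‖iteratedFDeriv ℝ k R z‖ ≤ b) →
            ∀ Φ : E2 → E2,
              (Φ = fun z =>
                (WithLp.equiv 2 (Fin 2 → ℝ)).symm ![1 - a * (z 0) ^ 2, 0] + R z) →
              ∀ z : E2, (z 0 ∈ Icc (-2:ℝ) 2 ∧ z 1 ∈ Icc (-2:ℝ) 2) →
                ∀ n : ℕ, 1 ≤ n →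
                  (∀ j < n,
                    ((Φ^[j] z) 0 ∈ Icc (-2:ℝ) 2 ∧ (Φ^[j] z) 1 ∈ Icc (-2:ℝ) 2)
                      ∧ ¬ |(Φ^[j] z) 0| ≤ δ) →
                  (∀ w : E2, w ≠ 0 → |w 1| ≤ |w 0| / 10 →
                    δ * lam ^ n * ‖w‖ ≤ ‖fderiv ℝ (Φ^[n]) z w‖ ∧
                      (|(Φ^[n] z) 0| ≤ δ → lam ^ n * ‖w‖ ≤ ‖fderiv ℝ (Φ^[n]) z w‖)) ∧
                  ∃ e : E2, ‖e‖ = 1 ∧ ‖fderiv ℝ (Φ^[n]) z e‖ ≤ (C * b) ^ n := by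
  refine ⟨1.1, 2, by norm_num, by norm_num, fun δ hδ =>
    ⟨2 - tol δ, by linarith [tol_pos hδ], tol δ, tol_pos hδ, ?_⟩⟩
  intro a b R ha ha' hb hb' hR hRb Φ hΦ z _ n hn horbit
  change Φ = henonMap a R at hΦ
  subst hΦ
  have hR0 : ∀ y, ‖R y‖ ≤ b := fun y => by simpa using hRb y 0 (by norm_num)
  have hR1 : ∀ y, ‖fderiv ℝ R y‖ ≤ b := fun y => by
    simpa [← norm_iteratedFDeriv_fderiv] using hRb y 1 (by norm_num)
  have hR' : Differentiable ℝ R := hR.differentiable (by norm_num)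
  obtain ⟨hbδ, hb₀⟩ := tol_le hδ
  have hx : ∀ j < n, δ < |(henonMap a R)^[j] z 0| ∧ |(henonMap a R)^[j] z 0| ≤ 2 := fun j hj =>
    ⟨not_le.mp (horbit j hj).2, abs_le.mpr (horbit j hj).1.1⟩
  have hc : ∀ j < n, 12 * b ≤ 2 * a * |(henonMap a R)^[j] z 0| := fun j hj => by
    nlinarith [(hx j hj).1]
  obtain ⟨hPδ, hPΔ⟩ := prod_ge_of_pseudoOrbit hδ hn ha ha' hb hb' hx fun j _ => by
    rw [Function.iterate_succ_apply']; exact abs_henonMap_apply_zero_sub_le hR0 _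
  refine ⟨fun w _ hw => ?_, exists_norm_fderiv_henonMap_iterate_le hR' hR1 (by linarith) hb hc⟩
  have hexp := norm_fderiv_henonMap_iterate_ge hR' hR1 (by linarith) hc hw
  exact ⟨by nlinarith [norm_nonneg w], fun hxn => by nlinarith [hPΔ hxn, norm_nonneg w]⟩
end

section
/- Let δ ∈ (0,1), a ∈ [1,2] and b > 0 with b ≤ δ²/10. Let Φ(x,y) = (1 − a x², 0) + R(x,y), where R : ℝ² → ℝ² is continuously differentiable with all first-order partial derivatives bounded in absolute value by b. Let z = (x,y) be a point with |x| ≥ δ. Then every unit vector e = (e₁, e₂) ∈ ℝ² that minimizes ‖DΦ(z) e‖ over all unit vectors satisfies |e₁| ≤ 2b/δ; that is, the most contracted direction of DΦ(z) is within angle of order b/δ of the vertical direction. -/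
section EntryBounds

variable {ι κ : Type*} [Fintype ι]

theorem sum_abs_apply_le_card_of_norm_eq_one {e : EuclideanSpace ℝ ι} (he : ‖e‖ = 1) :
    ∑ i, |e i| ≤ Fintype.card ι := by
  calc ∑ i, |e i| ≤ ∑ _i : ι, (1 : ℝ) :=
        Finset.sum_le_sum fun i _ => he ▸ PiLp.norm_apply_le e i
    _ = Fintype.card ι := by simp

variable [DecidableEq ι]

theorem norm_le_sum_abs_apply (w : EuclideanSpace ℝ ι) : ‖w‖ ≤ ∑ i, |w i| := by
  calc ‖w‖ = ‖∑ i, w i • EuclideanSpace.single i (1 : ℝ)‖ := by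
        simpa using congrArg norm ((EuclideanSpace.basisFun ι ℝ).sum_repr w).symm
    _ ≤ ∑ i, ‖w i • EuclideanSpace.single i (1 : ℝ)‖ := norm_sum_le _ _
    _ = ∑ i, |w i| := by simp [norm_smul]

theorem abs_apply_le_mul_sum_abs (T : EuclideanSpace ℝ ι →L[ℝ] EuclideanSpace ℝ κ) {b : ℝ}
    (hT : ∀ i k, |T (EuclideanSpace.single i 1) k| ≤ b) (v : EuclideanSpace ℝ ι) (k : κ) :
    |T v k| ≤ b * ∑ i, |v i| := by
  have hv : T v k = ∑ i, v i * T (EuclideanSpace.single i 1) k := by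
    conv_lhs => rw [← (EuclideanSpace.basisFun ι ℝ).sum_repr v]
    simp
  calc |T v k| ≤ ∑ i, |v i| * |T (EuclideanSpace.single i 1) k| := by
        simpa only [hv, abs_mul] using
          Finset.abs_sum_le_sum_abs (fun i => v i * T (EuclideanSpace.single i 1) k) Finset.univ
    _ ≤ ∑ i, |v i| * b := by gcongr with i; exact hT i k
    _ = b * ∑ i, |v i| := by rw [Finset.mul_sum]; simp only [mul_comm]

theorem abs_mul_abs_apply_le_of_norm_le_norm_single
    {L T : EuclideanSpace ℝ ι →L[ℝ] EuclideanSpace ℝ ι} {c b : ℝ} {i j : ι} (hji : j ≠ i)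
    (hL : L = c • (EuclideanSpace.proj i).smulRight (EuclideanSpace.single i 1) + T)
    (hT : ∀ i k, |T (EuclideanSpace.single i 1) k| ≤ b) {e : EuclideanSpace ℝ ι} (he : ‖e‖ = 1)
    (hmin : ‖L e‖ ≤ ‖L (EuclideanSpace.single j 1)‖) :
    |c| * |e i| ≤ 2 * Fintype.card ι * b := by
  have hLj : ‖L (EuclideanSpace.single j 1)‖ ≤ Fintype.card ι * b := by
    refine (norm_le_sum_abs_apply _).trans ?_
    calc ∑ k, |L (EuclideanSpace.single j 1) k| = ∑ k, |T (EuclideanSpace.single j 1) k| := by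
          simp [hL, hji]
      _ ≤ ∑ _k : ι, b := Finset.sum_le_sum fun k _ => hT j k
      _ = Fintype.card ι * b := by simp
  have hTe : |T e i| ≤ Fintype.card ι * b := by
    calc |T e i| ≤ b * ∑ k, |e k| := abs_apply_le_mul_sum_abs T hT e i
      _ ≤ b * Fintype.card ι := by
          have hb : 0 ≤ b := (abs_nonneg _).trans (hT i i)
          gcongr
          exact sum_abs_apply_le_card_of_norm_eq_one he
      _ = Fintype.card ι * b := mul_comm _ _
  have hLe : |L e i| ≤ Fintype.card ι * b :=
    (PiLp.norm_apply_le (L e) i).trans (hmin.trans hLj)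
  have hLei : L e i = c * e i + T e i := by simp [hL]
  calc |c| * |e i| = |L e i - T e i| := by rw [hLei, add_sub_cancel_right, abs_mul]
    _ ≤ |L e i| + |T e i| := abs_sub _ _
    _ ≤ 2 * Fintype.card ι * b := by linarith

end EntryBounds

theorem hasFDerivAt_henonLike (a : ℝ) {R : E2 → E2} {z : E2} (hR : DifferentiableAt ℝ R z) :
    HasFDerivAt (fun w : E2 => (WithLp.equiv 2 (Fin 2 → ℝ)).symm ![1 - a * w 0 ^ 2, 0] + R w)
      ((-(2 * a * z 0)) • (EuclideanSpace.proj 0 : E2 →L[ℝ] ℝ).smulRight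
        (EuclideanSpace.single 0 1) + fderiv ℝ R z) z := by
  have hquad : HasFDerivAt
      (fun w : E2 => (1 - a * w 0 ^ 2) • EuclideanSpace.single (0 : Fin 2) (1 : ℝ))
      ((-(2 * a * z 0)) • (EuclideanSpace.proj 0 : E2 →L[ℝ] ℝ).smulRight
        (EuclideanSpace.single 0 1)) z := by
    have hpoly := ((((EuclideanSpace.proj (0 : Fin 2) : E2 →L[ℝ] ℝ).hasFDerivAt
      (x := z)).pow 2).const_mul a).const_sub 1
    refine (hpoly.smul_const (EuclideanSpace.single (0 : Fin 2) (1 : ℝ))).congr_fderiv ?_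
    ext v i
    simp
    split_ifs <;> ring
  have hfun : (fun w : E2 => (WithLp.equiv 2 (Fin 2 → ℝ)).symm ![1 - a * w 0 ^ 2, 0] + R w) =
      fun w => (1 - a * w 0 ^ 2) • EuclideanSpace.single (0 : Fin 2) (1 : ℝ) + R w := by
    funext w
    ext i
    fin_cases i <;> simp
  rw [hfun]
  exact hquad.add hR.hasFDerivAt

theorem most_contracted_direction_nearly_vertical_general
    (δ a b : ℝ) (hδ : δ ∈ Set.Ioo (0:ℝ) 1) (ha : a ∈ Set.Icc (1:ℝ) 2)
    (R : E2 → E2) (hR : ContDiff ℝ 1 R)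
    (hRb : ∀ z : E2, ∀ i j : Fin 2, |fderiv ℝ R z (EuclideanSpace.single i 1) j| ≤ b)
    (Φ : E2 → E2)
    (hΦ : Φ = fun z =>
      (WithLp.equiv 2 (Fin 2 → ℝ)).symm ![1 - a * (z 0) ^ 2, 0] + R z)
    (z : E2) (hz : δ ≤ |z 0|)
    (e : E2) (he : ‖e‖ = 1)
    (hmin : ∀ v : E2, ‖v‖ = 1 → ‖fderiv ℝ Φ z e‖ ≤ ‖fderiv ℝ Φ z v‖) :
    |e 0| ≤ 2 * b / δ := by
  have hDΦ : fderiv ℝ Φ z = (-(2 * a * z 0)) • (EuclideanSpace.proj 0 : E2 →L[ℝ] ℝ).smulRight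
      (EuclideanSpace.single 0 1) + fderiv ℝ R z := by
    rw [hΦ]
    exact (hasFDerivAt_henonLike a (hR.differentiable one_ne_zero z)).fderiv
  have hcontract := abs_mul_abs_apply_le_of_norm_le_norm_single (j := 1) (by decide) hDΦ
    (hRb z) he (hmin _ (by simp))
  rw [Fintype.card_fin, Nat.cast_ofNat, abs_neg, abs_mul, abs_mul, abs_two,
    abs_of_pos (by linarith [ha.1])] at hcontract
  have hax : δ ≤ a * |z 0| := by nlinarith [ha.1, abs_nonneg (z 0)]
  rw [le_div_iff₀ hδ.1]
  nlinarith [abs_nonneg (e 0)]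

/-- Outside the critical strip, the most contracted direction of the derivative of a
Hénon-like map is within angle of order `b/δ` of the vertical direction. -/
theorem most_contracted_direction_nearly_vertical
    (δ a b : ℝ) (hδ : δ ∈ Set.Ioo (0:ℝ) 1) (ha : a ∈ Set.Icc (1:ℝ) 2)
    (hb : 0 < b) (hbδ : b ≤ δ ^ 2 / 10)
    (R : E2 → E2) (hR : ContDiff ℝ 1 R)
    (hRb : ∀ z : E2, ∀ i j : Fin 2, |fderiv ℝ R z (EuclideanSpace.single i 1) j| ≤ b)
    (Φ : E2 → E2)
    (hΦ : Φ = fun z =>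
      (WithLp.equiv 2 (Fin 2 → ℝ)).symm ![1 - a * (z 0) ^ 2, 0] + R z)
    (z : E2) (hz : δ ≤ |z 0|)
    (e : E2) (he : ‖e‖ = 1)
    (hmin : ∀ v : E2, ‖v‖ = 1 → ‖fderiv ℝ Φ z e‖ ≤ ‖fderiv ℝ Φ z v‖) :
    |e 0| ≤ 2 * b / δ :=
  most_contracted_direction_nearly_vertical_general δ a b hδ ha R hR hRb Φ hΦ z hz e he hmin
end

section
/- For every ε > 0 there exists a positive integer m₀ such that for every integer m ≥ m₀ and every integer R ≥ m, the number of finite sequences ((r₁, m₁), …, (r_t, m_t)), where t ≥ 1 is arbitrary, each r_i is a nonzero integer with |r_i| ≥ m, |r₁| + ⋯ + |r_t| = R, and each m_i is an integer with 1 ≤ m_i ≤ r_i², is at most e^{ε·R}. -/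
/-!
Split a sequence at its first pair `(r, j)`: for `|r| = k` there are at most `2k²` choices of this
pair, and none when `k < m`. So the number `N R` of sequences of total depth `R` satisfies
`N R ≤ ∑_{m ≤ k ≤ R} 2k² N (R - k)`, and induction on `R` gives `N R ≤ e^{εR}` as soon as
`∑_{k ≥ m} 2k² e^{-εk} ≤ 1`, which holds for large `m` because `∑ 2k² e^{-εk}` converges.
-/

open Finset

theorem Summable.exists_forall_sum_lt {f : ℕ → ℝ} (hf : Summable f) {c : ℝ} (hc : 0 < c) :
    ∃ N, ∀ t : Finset ℕ, (∀ n ∈ t, N ≤ n) → ∑ n ∈ t, f n < c := by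
  obtain ⟨s, hs⟩ := hf.vanishing (Iio_mem_nhds hc)
  refine ⟨s.sup id + 1, fun t ht => hs t (disjoint_left.mpr fun n hnt hns => ?_)⟩
  have hn_le : n ≤ s.sup id := le_sup (f := id) hns
  have := ht n hnt
  omega

theorem le_exp_of_le_sum_mul {ε : ℝ} {a N : ℕ → ℝ} (ha : ∀ k, 0 ≤ a k) (h0 : N 0 ≤ 1)
    (hrec : ∀ R, 0 < R → N R ≤ ∑ k ∈ Icc 1 R, a k * N (R - k))
    (hA : ∀ R, ∑ k ∈ Icc 1 R, a k * Real.exp (-ε * k) ≤ 1) (R : ℕ) :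
    N R ≤ Real.exp (ε * R) := by
  induction R using Nat.strong_induction_on with
  | _ R ih =>
  rcases Nat.eq_zero_or_pos R with rfl | hR
  · simpa using h0
  calc N R ≤ ∑ k ∈ Icc 1 R, a k * N (R - k) := hrec R hR
    _ ≤ ∑ k ∈ Icc 1 R, a k * (Real.exp (ε * R) * Real.exp (-ε * k)) := by
        gcongr with k hk
        · exact ha k
        obtain ⟨hk1, hkR⟩ := mem_Icc.mp hk
        rw [← Real.exp_add]
        exact (ih (R - k) (by omega)).trans_eq (by push_cast [Nat.cast_sub hkR]; ring_nf)
    _ = Real.exp (ε * R) * ∑ k ∈ Icc 1 R, a k * Real.exp (-ε * k) := by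
        rw [mul_sum]; congr! 1 with k; ring
    _ ≤ Real.exp (ε * R) := mul_le_of_le_one_right (Real.exp_nonneg _) (hA R)

section WordsOfWeight

variable {α : Type*} (S : Set α) (w : α → ℕ)

def wordsOfWeight (R : ℕ) : Set (List α) :=
  {L | (∀ a ∈ L, a ∈ S) ∧ (L.map w).sum = R}

variable {S w}

theorem wordsOfWeight_zero (hpos : ∀ a ∈ S, 0 < w a) : wordsOfWeight S w 0 = {[]} := by
  ext (_ | ⟨a, L⟩)
  · simp [wordsOfWeight]
  · simp only [wordsOfWeight, List.mem_cons, forall_eq_or_imp, List.map_cons, List.sum_cons,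
      Set.mem_ofPred_eq, Set.mem_singleton_iff, reduceCtorEq, iff_false]
    rintro ⟨⟨ha, -⟩, hsum⟩
    have := hpos a ha
    omega

theorem wordsOfWeight_eq_biUnion (hpos : ∀ a ∈ S, 0 < w a) {R : ℕ} (hR : 0 < R) :
    wordsOfWeight S w R = ⋃ k ∈ Icc 1 R,
      Function.uncurry List.cons '' ({a ∈ S | w a = k} ×ˢ wordsOfWeight S w (R - k)) := by
  ext (_ | ⟨a, L⟩)
  · simp [wordsOfWeight, hR.ne]
  · simp only [wordsOfWeight, List.mem_cons, forall_eq_or_imp, List.map_cons, List.sum_cons,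
      Set.mem_ofPred_eq, Set.mem_iUnion, Set.mem_image, Set.mem_prod, Prod.exists,
      Function.uncurry_apply_pair, List.cons.injEq, mem_Icc]
    constructor
    · rintro ⟨⟨ha, hL⟩, hsum⟩
      exact ⟨w a, ⟨hpos a ha, by omega⟩, a, L, ⟨⟨ha, rfl⟩, hL, by omega⟩, rfl, rfl⟩
    · rintro ⟨k, ⟨hk1, hkR⟩, b, L', ⟨⟨hb, rfl⟩, hL', hsum⟩, rfl, rfl⟩
      exact ⟨⟨hb, hL'⟩, by omega⟩

theorem finite_wordsOfWeight (hpos : ∀ a ∈ S, 0 < w a) (hfin : ∀ k, {a ∈ S | w a = k}.Finite)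
    (R : ℕ) : (wordsOfWeight S w R).Finite := by
  induction R using Nat.strong_induction_on with
  | _ R ih =>
  rcases Nat.eq_zero_or_pos R with rfl | hR
  · simp [wordsOfWeight_zero hpos]
  rw [wordsOfWeight_eq_biUnion hpos hR]
  refine (Icc 1 R).finite_toSet.biUnion fun k hk => ((hfin k).prod (ih _ ?_)).image _
  have := (mem_Icc.mp hk).1
  omega

theorem ncard_wordsOfWeight_le (hpos : ∀ a ∈ S, 0 < w a) (hfin : ∀ k, {a ∈ S | w a = k}.Finite)
    {R : ℕ} (hR : 0 < R) : (wordsOfWeight S w R).ncard ≤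
      ∑ k ∈ Icc 1 R, {a ∈ S | w a = k}.ncard * (wordsOfWeight S w (R - k)).ncard := by
  rw [wordsOfWeight_eq_biUnion hpos hR]
  refine (set_ncard_biUnion_le _ _).trans (sum_le_sum fun k _ => ?_)
  rw [← Set.ncard_prod]
  exact Set.ncard_image_le ((hfin k).prod (finite_wordsOfWeight hpos hfin _))

theorem ncard_wordsOfWeight_le_exp (hpos : ∀ a ∈ S, 0 < w a)
    (hfin : ∀ k, {a ∈ S | w a = k}.Finite) {ε : ℝ}
    (hε : ∀ R, ∑ k ∈ Icc 1 R, ({a ∈ S | w a = k}.ncard : ℝ) * Real.exp (-ε * k) ≤ 1) (R : ℕ) :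
    ((wordsOfWeight S w R).ncard : ℝ) ≤ Real.exp (ε * R) := by
  refine le_exp_of_le_sum_mul (N := fun R => ((wordsOfWeight S w R).ncard : ℝ))
    (fun _ => Nat.cast_nonneg _) ?_ (fun R hR => ?_) hε R
  · simp [wordsOfWeight_zero hpos]
  · exact_mod_cast ncard_wordsOfWeight_le hpos hfin hR

end WordsOfWeight

def returnData (m : ℕ) : Set (ℤ × ℤ) :=
  {p | p.1 ≠ 0 ∧ (m : ℤ) ≤ |p.1| ∧ 1 ≤ p.2 ∧ p.2 ≤ p.1 ^ 2}

theorem returnData_depth_subset (m k : ℕ) :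
    {p ∈ returnData m | p.1.natAbs = k} ⊆
      (({(k : ℤ), -(k : ℤ)} : Finset ℤ) ×ˢ Icc 1 ((k : ℤ) ^ 2) : Finset (ℤ × ℤ)) := by
  rintro ⟨r, j⟩ ⟨⟨-, -, hj1, hj2⟩, hk⟩
  simp only [coe_product, Set.mem_prod, coe_insert, coe_singleton, Set.mem_insert_iff,
    Set.mem_singleton_iff, coe_Icc, Set.mem_Icc]
  subst hk
  exact ⟨Int.natAbs_eq r, hj1, by rwa [Int.natAbs_sq]⟩

theorem ncard_returnData_depth_le (m k : ℕ) :
    {p ∈ returnData m | p.1.natAbs = k}.ncard ≤ if m ≤ k then 2 * k ^ 2 else 0 := by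
  split_ifs with hmk
  · refine (Set.ncard_le_ncard (returnData_depth_subset m k) (Finset.finite_toSet _)).trans ?_
    rw [Set.ncard_coe_finset, card_product, Int.card_Icc, add_sub_cancel_right]
    gcongr
    · exact card_le_two
    · rw [← Nat.cast_pow, Int.toNat_natCast]
  · suffices {p ∈ returnData m | p.1.natAbs = k} = ∅ by simp [this]
    refine Set.eq_empty_of_forall_notMem ?_
    rintro ⟨r, j⟩ ⟨⟨-, hm, -⟩, rfl⟩
    rw [Int.abs_eq_natAbs] at hm
    omega

theorem finite_returnData_depth (m k : ℕ) : {p ∈ returnData m | p.1.natAbs = k}.Finite :=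
  (Finset.finite_toSet _).subset (returnData_depth_subset m k)

theorem sum_ncard_returnData_depth_mul_exp_le (m R : ℕ) (ε : ℝ) :
    ∑ k ∈ Icc 1 R, ({p ∈ returnData m | p.1.natAbs = k}.ncard : ℝ) * Real.exp (-ε * k) ≤
      ∑ k ∈ (Icc 1 R).filter (m ≤ ·), 2 * ((k : ℝ) ^ 2 * Real.exp (-ε * k)) := by
  rw [sum_filter]
  gcongr with k
  calc ({p ∈ returnData m | p.1.natAbs = k}.ncard : ℝ) * Real.exp (-ε * k)
      ≤ ((if m ≤ k then 2 * k ^ 2 else 0 : ℕ) : ℝ) * Real.exp (-ε * k) := by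
        gcongr; exact ncard_returnData_depth_le m k
    _ = if m ≤ k then 2 * ((k : ℝ) ^ 2 * Real.exp (-ε * k)) else 0 := by
        split_ifs <;> push_cast <;> ring

/-- Lemma 5.2: the number of sequences `((r₁,m₁),…,(r_t,m_t))` of essential return data
with each `|rᵢ| ≥ m`, `1 ≤ mᵢ ≤ rᵢ²` and total depth `|r₁| + ⋯ + |r_t| = R` is at most
`e^{εR}`, provided `m` is sufficiently large. -/
theorem count_return_sequences :
    ∀ ε : ℝ, 0 < ε → ∃ m₀ : ℕ, 0 < m₀ ∧
      ∀ m R : ℕ, m₀ ≤ m → m ≤ R →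
        (Set.ncard {L : List (ℤ × ℤ) |
            L ≠ [] ∧
            (∀ p ∈ L, p.1 ≠ 0 ∧ (m : ℤ) ≤ |p.1| ∧ 1 ≤ p.2 ∧ p.2 ≤ p.1 ^ 2) ∧
            (L.map (fun p => p.1.natAbs)).sum = R} : ℝ)
          ≤ Real.exp (ε * R) := by
  intro ε hε
  obtain ⟨m₀, hm₀⟩ := ((Real.summable_pow_mul_exp_neg_nat_mul 2 hε).mul_left 2).exists_forall_sum_lt
    one_pos
  refine ⟨m₀ + 1, m₀.succ_pos, fun m R hm _ => ?_⟩
  have hpos : ∀ p ∈ returnData m, 0 < p.1.natAbs := fun p hp => Int.natAbs_pos.mpr hp.1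
  have htail (R' : ℕ) : ∑ k ∈ Icc 1 R', ({p ∈ returnData m | p.1.natAbs = k}.ncard : ℝ) *
      Real.exp (-ε * k) ≤ 1 :=
    (sum_ncard_returnData_depth_mul_exp_le m R' ε).trans
      (hm₀ _ fun k hk => by have := (mem_filter.mp hk).2; omega).le
  have hwords := finite_wordsOfWeight hpos (finite_returnData_depth m) R
  calc _ ≤ ((wordsOfWeight (returnData m) (fun p => p.1.natAbs) R).ncard : ℝ) := by
        refine Nat.cast_le.mpr (Set.ncard_le_ncard ?_ hwords)
        exact fun L hL => ⟨hL.2.1, hL.2.2⟩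
    _ ≤ Real.exp (ε * R) := ncard_wordsOfWeight_le_exp hpos (finite_returnData_depth m) htail R
end
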